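/- For every T1 topological space X, cs_χ(X) ≤ cs*_χ(X) · sup{ |[κ]^{≤ω}| : κ < cs*_χ(X) } ≤ (cs*_χ(X))^{ℵ0}, where [κ]^{≤ω} denotes the collection of all at most countable subsets of κ. -/

import Mathlib

open Set Filter Topology Cardinal Pointwise

universe u v

section Defs

variable {X : Type u} [TopologicalSpace X]

/-- A sequence converging to `x`: a countably infinite set `S` such that `S \ U` is finite
for every neighborhood `U` of `x`. -/
def ConvSeqTo (S : Set X) (x : X) : Prop :=
  S.Countable ∧ S.Infinite ∧ ∀ U ∈ 𝓝 x, (S \ U).Finite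

/-- `𝒩` is a cs*-network at `x`: for every neighborhood `U` of `x` and every sequence `S`
converging to `x` there is `N ∈ 𝒩` with `N ⊆ U` containing infinitely many members of `S`. -/
def IsCsStarNetworkAt (𝒩 : Set (Set X)) (x : X) : Prop :=
  ∀ U ∈ 𝓝 x, ∀ S : Set X, ConvSeqTo S x → ∃ N ∈ 𝒩, N ⊆ U ∧ (S ∩ N).Infinite

/-- `𝒩` is a cs-network at `x`: for every neighborhood `U` of `x` and every sequence `S`
converging to `x` there is `N ∈ 𝒩` with `N ⊆ U` containing all but finitely many members. -/
def IsCsNetworkAt (𝒩 : Set (Set X)) (x : X) : Prop :=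
  ∀ U ∈ 𝓝 x, ∀ S : Set X, ConvSeqTo S x → ∃ N ∈ 𝒩, N ⊆ U ∧ (S \ N).Finite

/-- `B` is a sequential barrier at `x`: every sequence converging to `x` lies eventually in `B`. -/
def IsSeqBarrierAt (B : Set X) (x : X) : Prop :=
  ∀ S : Set X, ConvSeqTo S x → (S \ B).Finite

/-- `𝒩` is an sb-network at `x`. -/
def IsSbNetworkAt (𝒩 : Set (Set X)) (x : X) : Prop :=
  ∀ U ∈ 𝓝 x, ∃ N ∈ 𝒩, x ∈ N ∧ N ⊆ U ∧ IsSeqBarrierAt N x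

/-- `𝒩` is a neighborhood base at `x`. -/
def IsNbhdBasisAt (𝒩 : Set (Set X)) (x : X) : Prop :=
  (∀ N ∈ 𝒩, N ∈ 𝓝 x) ∧ ∀ U ∈ 𝓝 x, ∃ N ∈ 𝒩, N ⊆ U

/-- Smallest cardinality of a cs*-network at `x`. -/
noncomputable def csStarCharAt (x : X) : Cardinal.{u} :=
  sInf {c | ∃ 𝒩 : Set (Set X), IsCsStarNetworkAt 𝒩 x ∧ #𝒩 = c}

/-- Smallest cardinality of a cs-network at `x`. -/
noncomputable def csCharAt (x : X) : Cardinal.{u} :=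
  sInf {c | ∃ 𝒩 : Set (Set X), IsCsNetworkAt 𝒩 x ∧ #𝒩 = c}

/-- Smallest cardinality of an sb-network at `x`. -/
noncomputable def sbCharAt (x : X) : Cardinal.{u} :=
  sInf {c | ∃ 𝒩 : Set (Set X), IsSbNetworkAt 𝒩 x ∧ #𝒩 = c}

/-- Smallest cardinality of a neighborhood base at `x`. -/
noncomputable def charAt (x : X) : Cardinal.{u} :=
  sInf {c | ∃ 𝒩 : Set (Set X), IsNbhdBasisAt 𝒩 x ∧ #𝒩 = c}

end Defs

/-- The cs*-character of a space (`1` for the empty space). -/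
noncomputable def csStarChar (X : Type u) [TopologicalSpace X] : Cardinal.{u} :=
  max 1 (⨆ x : X, csStarCharAt x)

/-- The cs-character of a space (`1` for the empty space). -/
noncomputable def csChar (X : Type u) [TopologicalSpace X] : Cardinal.{u} :=
  max 1 (⨆ x : X, csCharAt x)

/-- The sb-character of a space (`1` for the empty space). -/
noncomputable def sbChar (X : Type u) [TopologicalSpace X] : Cardinal.{u} :=
  max 1 (⨆ x : X, sbCharAt x)

/-- The character of a space (`1` for the empty space). -/
noncomputable def charCard (X : Type u) [TopologicalSpace X] : Cardinal.{u} :=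
  max 1 (⨆ x : X, charAt x)

/-- `X` has countable cs*-character: every point has a countable cs*-network. -/
def CountableCsStarChar (X : Type u) [TopologicalSpace X] : Prop :=
  ∀ x : X, ∃ 𝒩 : Set (Set X), 𝒩.Countable ∧ IsCsStarNetworkAt 𝒩 x

/-- `X` has countable sb-character: every point has a countable sb-network. -/
def CountableSbChar (X : Type u) [TopologicalSpace X] : Prop :=
  ∀ x : X, ∃ 𝒩 : Set (Set X), 𝒩.Countable ∧ IsSbNetworkAt 𝒩 x

/-- `X` carries the inductive topology with respect to the cover `𝒞`: a set is closed iff its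
trace on each `C ∈ 𝒞` is closed in the subspace `C`. -/
def InductiveTopology (X : Type u) [TopologicalSpace X] (𝒞 : Set (Set X)) : Prop :=
  ∀ F : Set X, IsClosed F ↔ ∀ C ∈ 𝒞, IsClosed (Subtype.val ⁻¹' F : Set C)

/-- A `k_ω`-space: inductive topology w.r.t. a countable cover by compact sets. -/
def IsKOmegaSpace (X : Type u) [TopologicalSpace X] : Prop :=
  ∃ 𝒞 : Set (Set X), 𝒞.Countable ∧ ⋃₀ 𝒞 = Set.univ ∧ (∀ C ∈ 𝒞, IsCompact C) ∧
    InductiveTopology X 𝒞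

/-- An `MK_ω`-space: inductive topology w.r.t. a countable cover by compact metrizable sets. -/
def IsMKOmegaSpace (X : Type u) [TopologicalSpace X] : Prop :=
  ∃ 𝒞 : Set (Set X), 𝒞.Countable ∧ ⋃₀ 𝒞 = Set.univ ∧
    (∀ C ∈ 𝒞, IsCompact C ∧ TopologicalSpace.MetrizableSpace C) ∧ InductiveTopology X 𝒞

/-- An `M_ω`-space: inductive topology w.r.t. a countable cover by closed metrizable sets. -/
def IsMOmegaSpace (X : Type u) [TopologicalSpace X] : Prop :=
  ∃ 𝒞 : Set (Set X), 𝒞.Countable ∧ ⋃₀ 𝒞 = Set.univ ∧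
    (∀ C ∈ 𝒞, IsClosed C ∧ TopologicalSpace.MetrizableSpace C) ∧ InductiveTopology X 𝒞

/-- An α₄-space: given countably many sequences converging to a common point `x`, some sequence
converging to `x` meets infinitely many of them. -/
def Alpha4Space (X : Type u) [TopologicalSpace X] : Prop :=
  ∀ (x : X) (S : ℕ → Set X), (∀ n, ConvSeqTo (S n) x) →
    ∃ T : Set X, ConvSeqTo T x ∧ {n | (T ∩ S n).Nonempty}.Infinite

/-- An α₇-space: given countably many sequences converging to a common point `x`, some sequence
converging to some point `y` meets infinitely many of them. -/
def Alpha7Space (X : Type u) [TopologicalSpace X] : Prop :=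
  ∀ (x : X) (S : ℕ → Set X), (∀ n, ConvSeqTo (S n) x) →
    ∃ (T : Set X) (y : X), ConvSeqTo T y ∧ {n | (T ∩ S n).Nonempty}.Infinite

/-- The small cardinal 𝔭: the smallest cardinality of a family of infinite subsets of ω closed
under finite intersections and having no infinite pseudo-intersection. -/
noncomputable def pCard : Cardinal.{0} :=
  sInf {c | ∃ F : Set (Set ℕ), (∀ A ∈ F, A.Infinite) ∧ (∀ A ∈ F, ∀ B ∈ F, A ∩ B ∈ F) ∧
    (¬ ∃ I : Set ℕ, I.Infinite ∧ ∀ A ∈ F, (I \ A).Finite) ∧ #F = c}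

/-- The small cardinal 𝔡: the smallest cardinality of a dominating family in `ℕ → ℕ`. -/
noncomputable def dCard : Cardinal.{0} :=
  sInf {c | ∃ D : Set (ℕ → ℕ), (∀ f : ℕ → ℕ, ∃ g ∈ D, ∀ n, f n ≤ g n) ∧ #D = c}

/-- The pseudocharacter of `X`: the least `c` such that every singleton is the intersection of a
family of at most `c` open sets. -/
noncomputable def psiChar (X : Type u) [TopologicalSpace X] : Cardinal.{u} :=
  sInf {c | ∀ x : X, ∃ 𝒰 : Set (Set X), (∀ U ∈ 𝒰, IsOpen U) ∧ ⋂₀ 𝒰 = {x} ∧ #𝒰 ≤ c}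

/-- The weight of `X`: the smallest cardinality of a base of the topology. -/
noncomputable def weightCard (X : Type u) [TopologicalSpace X] : Cardinal.{u} :=
  sInf {c | ∃ B : Set (Set X), TopologicalSpace.IsTopologicalBasis B ∧ #B = c}

/-- Transfinite iteration of the sequential closure: `A^{(α)}`. -/
noncomputable def seqClIter {X : Type u} [TopologicalSpace X] (A : Set X) :
    Ordinal.{0} → Set X
  | α => A ∪ ⋃ β : {β : Ordinal.{0} // β < α}, seqClosure (seqClIter A β.1)
termination_by α => α
decreasing_by exact β.2

/-- The sequential order of `X`: the least ordinal `α` with `A^{(α+1)} = A^{(α)}` for all `A`. -/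
noncomputable def seqOrder (X : Type u) [TopologicalSpace X] : Ordinal.{0} :=
  sInf {α | ∀ A : Set X, seqClIter A (α + 1) = seqClIter A α}

/-- The cardinality `|[κ]^{≤ω}|` of the family of countable subsets of (a set of cardinality)
`κ`. -/
noncomputable def countableSubsetsCard (c : Cardinal.{u}) : Cardinal.{u} :=
  #{A : Set (Quotient.out c) // A.Countable}

/-- The space `𝕃 = {(0,0)} ∪ {(1/n, 1/(nm)) : n,m ∈ ℕ}` as a subspace of `ℝ²`. -/
def LSpace : Set (ℝ × ℝ) :=
  {(0, 0)} ∪ {p | ∃ n m : ℕ, 0 < n ∧ 0 < m ∧ p = (1 / (n : ℝ), 1 / ((n : ℝ) * (m : ℝ)))}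

/-!
Index a cs*-network at `x` of minimal size `λ` by the initial ordinal of `λ`, so that every
initial segment has fewer than `λ` members. Given a neighbourhood `U` and a sequence `S → x`, some
countable family of members inside `U`, all below a single index, covers all but finitely many
points of `S`. Otherwise the countably many members needed to cover `S` at all are cofinal, and
the parts of `S` left uncovered below the various indices have an infinite pseudo-intersection:
a sequence converging to `x` that meets each member inside `U` in a finite set only. Unions of
countable families below an index thus form a cs-network of size `λ · sup {|[κ]^{≤ω}| : κ < λ}`.
In a T1 space `λ` is infinite when `x` is a limit, so the index order has no maximum.
-/

theorem Set.Countable.exists_countable_subset_diff_biUnion_finite {α ι : Type*} {S : Set α}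
    (hS : S.Countable) {f : ι → Set α} {Q : Set ι} (h : (S \ ⋃ j ∈ Q, f j).Finite) :
    ∃ A ⊆ Q, A.Countable ∧ (S \ ⋃ j ∈ A, f j).Finite := by
  have : ∀ y : ↥(S ∩ ⋃ j ∈ Q, f j), ∃ j ∈ Q, (y : α) ∈ f j := fun y => by
    simpa only [mem_iUnion₂, exists_prop] using y.2.2
  choose g hgQ hg using this
  have : Countable ↥(S ∩ ⋃ j ∈ Q, f j) := (hS.mono inter_subset_left).to_subtype
  refine ⟨range g, range_subset_iff.2 hgQ, countable_range g, h.subset ?_⟩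
  rintro y ⟨hyS, hyA⟩
  exact ⟨hyS, fun hyQ => hyA (mem_biUnion (mem_range_self ⟨y, hyS, hyQ⟩) (hg _))⟩

theorem Set.exists_infinite_forall_diff_finite_of_antitone_nat {α : Type*} {D : ℕ → Set α}
    (hD : Antitone D) (hinf : ∀ n, (D n).Infinite) :
    ∃ T ⊆ ⋃ n, D n, T.Infinite ∧ ∀ n, (T \ D n).Finite := by
  -- once `u` is injective, `u '' Iio n` has exactly `n` points, so `u n ∈ D n`
  obtain ⟨u, hu⟩ := seq_of_forall_finite_exists (P := fun c t => c ∉ t ∧ c ∈ D t.ncard)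
    fun t ht => ((hinf _).sdiff ht).nonempty.imp fun c hc => ⟨hc.2, hc.1⟩
  have hinj : u.Injective := .of_lt_imp_ne fun m n hmn h => (hu n).1 ⟨m, hmn, h⟩
  have hmem : ∀ n, u n ∈ D n := fun n => by
    simpa only [ncard_image_of_injective _ hinj, ncard_Iio_nat] using (hu n).2
  refine ⟨range u, range_subset_iff.2 fun n => mem_iUnion_of_mem n (hmem n),
    infinite_range_of_injective hinj, fun n => ((finite_Iio n).image u).subset ?_⟩
  rintro _ ⟨⟨m, rfl⟩, hm⟩
  exact ⟨m, lt_of_not_ge fun h => hm (hD h (hmem m)), rfl⟩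

theorem Set.exists_infinite_forall_diff_finite_of_antitone {α ι : Type*} [Preorder ι]
    [IsDirectedOrder ι] [Nonempty ι] [(atTop : Filter ι).IsCountablyGenerated] {D : ι → Set α}
    (hD : Antitone D) (hinf : ∀ i, (D i).Infinite) :
    ∃ T ⊆ ⋃ i, D i, T.Infinite ∧ ∀ i, (T \ D i).Finite := by
  obtain ⟨γ, hγ, hγ_top⟩ := exists_seq_monotone_tendsto_atTop_atTop ι
  obtain ⟨T, hTD, hT, hTfin⟩ :=
    exists_infinite_forall_diff_finite_of_antitone_nat (hD.comp_monotone hγ) fun n => hinf (γ n)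
  refine ⟨T, hTD.trans (iUnion_subset fun n => subset_iUnion D (γ n)), hT, fun i => ?_⟩
  obtain ⟨n, hn⟩ := (hγ_top.eventually_ge_atTop i).exists
  exact (hTfin n).subset (sdiff_subset_sdiff_right (hD hn))

section Networks

variable {X : Type u} [TopologicalSpace X] {x : X}

theorem ConvSeqTo.mono {S T : Set X} (hS : ConvSeqTo S x) (hTS : T ⊆ S) (hT : T.Infinite) :
    ConvSeqTo T x :=
  ⟨hS.1.mono hTS, hT, fun U hU => (hS.2.2 U hU).subset (sdiff_subset_sdiff_left hTS)⟩

theorem isCsStarNetworkAt_univ (x : X) : IsCsStarNetworkAt (univ : Set (Set X)) x :=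
  fun U hU S hS => ⟨U, mem_univ U, subset_rfl, by
    simpa only [sdiff_sdiff_right_self] using hS.2.1.sdiff (hS.2.2 U hU)⟩

theorem IsCsStarNetworkAt.infinite [T1Space X] {𝒩 : Set (Set X)} (h𝒩 : IsCsStarNetworkAt 𝒩 x)
    {S : Set X} (hS : ConvSeqTo S x) : 𝒩.Infinite := by
  intro h𝒩fin
  have : ∀ N : ↥{N ∈ 𝒩 | (S ∩ N).Infinite}, ∃ y ∈ S ∩ N.1, y ≠ x := fun N =>
    (N.2.2.sdiff (finite_singleton x)).nonempty.imp fun _ hy => ⟨hy.1, hy.2⟩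
  choose y hyN hyx using this
  have : Finite ↥{N ∈ 𝒩 | (S ∩ N).Infinite} := (h𝒩fin.sep _).to_subtype
  have hU : (range y)ᶜ ∈ 𝓝 x :=
    (finite_range y).isClosed.compl_mem_nhds fun ⟨N, hN⟩ => hyx N hN
  obtain ⟨N, hN, hNU, hNinf⟩ := h𝒩 _ hU S hS
  exact hNU (hyN ⟨N, hN, hNinf⟩).2 (mem_range_self _)

variable {ι : Type*} [LinearOrder ι] [NoMaxOrder ι] {f : ι → Set X}

theorem IsCsStarNetworkAt.exists_countable_cover (hf : IsCsStarNetworkAt (range f) x)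
    {U : Set X} (hU : U ∈ 𝓝 x) {S : Set X} (hS : ConvSeqTo S x) :
    ∃ i, ∃ A ⊆ Iio i, A.Countable ∧ (∀ j ∈ A, f j ⊆ U) ∧ (S \ ⋃ j ∈ A, f j).Finite := by
  set B : ι → Set X := fun i => ⋃ j ∈ {j | j < i ∧ f j ⊆ U}, f j
  suffices ∃ i, (S \ B i).Finite by
    obtain ⟨i, hi⟩ := this
    obtain ⟨A, hAB, hAc, hA⟩ := hS.1.exists_countable_subset_diff_biUnion_finite hi
    exact ⟨i, A, fun j hj => (hAB hj).1, hAc, fun j hj => (hAB hj).2, hA⟩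
  by_contra! hB
  have hmeet : ∀ T ⊆ S, T.Infinite → ∃ j, f j ⊆ U ∧ (T ∩ f j).Infinite := fun T hTS hT => by
    obtain ⟨_, ⟨j, rfl⟩, hjU, hj⟩ := hf U hU T (hS.mono hTS hT)
    exact ⟨j, hjU, hj⟩
  have hS_cover : (S \ ⋃ j ∈ {j | f j ⊆ U}, f j).Finite := by
    by_contra h
    obtain ⟨j, hjU, hj⟩ := hmeet _ sdiff_subset h
    obtain ⟨y, ⟨-, hy⟩, hyj⟩ := hj.nonempty
    exact hy (mem_biUnion hjU hyj)
  obtain ⟨A, hAU, hAc, hA⟩ := hS.1.exists_countable_subset_diff_biUnion_finite hS_cover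
  have hA_cofinal : ∀ i, ∃ a ∈ A, i ≤ a := fun i => by
    by_contra! h
    exact hB i (hA.subset (sdiff_subset_sdiff_right
      (biUnion_subset_biUnion_left fun j hj => ⟨h j hj, hAU hj⟩)))
  obtain ⟨j₀, -⟩ := hmeet S subset_rfl hS.2.1
  obtain ⟨a₀, ha₀, -⟩ := hA_cofinal j₀
  have : Nonempty A := ⟨⟨a₀, ha₀⟩⟩
  have : Countable A := hAc.to_subtype
  have hD : Antitone fun a : A => S \ B a := fun a b hab => sdiff_subset_sdiff_right
    (biUnion_subset_biUnion_left fun j hj => ⟨hj.1.trans_le hab, hj.2⟩)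
  obtain ⟨T, hTS, hT, hTB⟩ := exists_infinite_forall_diff_finite_of_antitone hD fun a => hB a
  obtain ⟨j, hjU, hj⟩ := hmeet T (hTS.trans (iUnion_subset fun _ => sdiff_subset)) hT
  obtain ⟨i, hji⟩ := exists_gt j
  obtain ⟨a, ha, hia⟩ := hA_cofinal i
  refine hj ((hTB ⟨a, ha⟩).subset fun y hy => ⟨hy.1, fun hyD => hyD.2 ?_⟩)
  exact mem_biUnion ⟨hji.trans_le hia, hjU⟩ hy.2

theorem IsCsStarNetworkAt.isCsNetworkAt_biUnion (hf : IsCsStarNetworkAt (range f) x) :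
    IsCsNetworkAt
      (range fun p : Σ i : ι, {A : Set (Iio i) // A.Countable} => ⋃ j ∈ p.2.1, f j) x := by
  intro U hU S hS
  obtain ⟨i, A, hAi, hAc, hAU, hA⟩ := hf.exists_countable_cover hU hS
  have hunion : ⋃ j ∈ ((↑) ⁻¹' A : Set (Iio i)), f j = ⋃ j ∈ A, f j := by
    rw [← biUnion_image (f := Subtype.val) (g := f), Subtype.image_preimage_coe,
      inter_eq_right.2 hAi]
  refine ⟨_, mem_range_self ⟨i, (↑) ⁻¹' A, hAc.preimage Subtype.val_injective⟩, ?_, ?_⟩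
  · simpa only [hunion] using iUnion₂_subset hAU
  · simpa only [hunion] using hA

end Networks

section CountableSubsets

theorem countableSubsetsCard_mk (α : Type u) :
    countableSubsetsCard #α = #{A : Set α // A.Countable} := by
  obtain ⟨e⟩ := Cardinal.eq.1 (mk_out #α)
  refine mk_congr ((Equiv.Set.congr e).subtypeEquiv fun A => ?_)
  exact ⟨fun hA => hA.image e, countable_of_injective_of_countable_image e.injective.injOn⟩

theorem mk_countable_subsets_le (α : Type u) :
    #{A : Set α // A.Countable} ≤ (#α + 1) ^ ℵ₀ := by
  have hsurj : Function.Surjective fun g : ℕ → Option α =>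
      (⟨some ⁻¹' range g, (countable_range g).preimage (Option.some_injective α)⟩ :
        {A : Set α // A.Countable}) := by
    rintro ⟨A, hA⟩
    have := hA.toEncodable
    refine ⟨fun n => (Encodable.decode (α := A) n).map (↑), Subtype.ext (Set.ext fun a => ?_)⟩
    simp only [mem_preimage, mem_range, Option.map_eq_some_iff]
    refine ⟨fun ⟨_, b, _, hb⟩ => hb ▸ b.2, fun ha => ⟨Encodable.encode (⟨a, ha⟩ : A), _,
      Encodable.encodek _, rfl⟩⟩
  simpa [mk_arrow, mk_option] using mk_le_of_surjective hsurj

theorem countableSubsetsCard_le_power_of_lt {κ c : Cardinal.{u}} (h : κ < c) :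
    countableSubsetsCard κ ≤ c ^ ℵ₀ := by
  refine (mk_countable_subsets_le κ.out).trans ?_
  rw [mk_out]
  exact power_le_power_right (add_one_le_of_lt h)

noncomputable def countableSubsetsSup (c : Cardinal.{u}) : Cardinal.{u} :=
  ⨆ κ : Iio c, countableSubsetsCard κ.1

theorem bddAbove_range_countableSubsetsCard (c : Cardinal.{u}) :
    BddAbove (range fun κ : Iio c => countableSubsetsCard κ.1) :=
  ⟨c ^ ℵ₀, forall_mem_range.2 fun κ => countableSubsetsCard_le_power_of_lt κ.2⟩

theorem countableSubsetsCard_le_countableSubsetsSup {κ c : Cardinal.{u}} (h : κ < c) :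
    countableSubsetsCard κ ≤ countableSubsetsSup c :=
  le_ciSup (bddAbove_range_countableSubsetsCard c) ⟨κ, h⟩

theorem countableSubsetsSup_mono : Monotone countableSubsetsSup.{u} := fun _ _ h =>
  ciSup_le' fun κ => countableSubsetsCard_le_countableSubsetsSup (κ.2.trans_le h)

theorem one_le_countableSubsetsSup {c : Cardinal.{u}} (hc : c ≠ 0) :
    1 ≤ countableSubsetsSup c := by
  have : Nonempty {A : Set (0 : Cardinal.{u}).out // A.Countable} := ⟨⟨∅, countable_empty⟩⟩
  exact (Cardinal.one_le_iff_ne_zero.2 (mk_ne_zero _)).trans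
    (countableSubsetsCard_le_countableSubsetsSup (pos_iff_ne_zero.2 hc))

theorem mul_countableSubsetsSup_le_power (c : Cardinal.{u}) :
    c * countableSubsetsSup c ≤ c ^ ℵ₀ :=
  calc c * countableSubsetsSup c ≤ c ^ ℵ₀ * c ^ ℵ₀ :=
        mul_le_mul' (self_le_power c one_le_aleph0)
          (ciSup_le' fun κ => countableSubsetsCard_le_power_of_lt κ.2)
    _ = c ^ ℵ₀ := by rw [← power_add, aleph0_add_aleph0]

end CountableSubsets

section CharacterBounds

variable {X : Type u} [TopologicalSpace X]

theorem csCharAt_le_mk {x : X} {𝒩 : Set (Set X)} (h𝒩 : IsCsNetworkAt 𝒩 x) : csCharAt x ≤ #𝒩 :=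
  csInf_le' ⟨𝒩, h𝒩, rfl⟩

theorem exists_isCsStarNetworkAt_mk_eq (x : X) :
    ∃ 𝒩 : Set (Set X), IsCsStarNetworkAt 𝒩 x ∧ #𝒩 = csStarCharAt x :=
  csInf_mem (s := {c | ∃ 𝒩 : Set (Set X), IsCsStarNetworkAt 𝒩 x ∧ #𝒩 = c})
    ⟨_, univ, isCsStarNetworkAt_univ x, rfl⟩

variable [T1Space X]

theorem csCharAt_le_of_convSeqTo {x : X} {S : Set X} (hS : ConvSeqTo S x) :
    csCharAt x ≤ csStarCharAt x * countableSubsetsSup (csStarCharAt x) := by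
  obtain ⟨𝒩, h𝒩, h𝒩card⟩ := exists_isCsStarNetworkAt_mk_eq x
  set l := csStarCharAt x
  have hl : ℵ₀ ≤ l := h𝒩card ▸ infinite_iff.1 (h𝒩.infinite hS).to_subtype
  have : NoMaxOrder l.ord.ToType := Cardinal.noMaxOrder hl
  obtain ⟨e⟩ : Nonempty (l.ord.ToType ≃ 𝒩) := Cardinal.eq.1 (by rw [mk_toType, card_ord, h𝒩card])
  have he : IsCsStarNetworkAt (range fun i => (e i : Set X)) x := by
    rwa [show (fun i => (e i : Set X)) = (↑) ∘ e from rfl, e.surjective.range_comp,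
      Subtype.range_coe]
  calc csCharAt x ≤ #(Σ i : l.ord.ToType, {A : Set (Iio i) // A.Countable}) :=
        (csCharAt_le_mk he.isCsNetworkAt_biUnion).trans mk_range_le
    _ ≤ sum fun _ : l.ord.ToType => countableSubsetsSup l := by
        rw [mk_sigma]
        refine sum_le_sum _ _ fun i => ?_
        rw [← countableSubsetsCard_mk]
        exact countableSubsetsCard_le_countableSubsetsSup (by simpa using mk_Iio_lt i)
    _ = l * countableSubsetsSup l := by rw [sum_const', mk_toType, card_ord]

theorem csCharAt_le_csStarChar_mul (x : X) :
    csCharAt x ≤ csStarChar X * countableSubsetsSup (csStarChar X) := by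
  by_cases hx : ∃ S : Set X, ConvSeqTo S x
  · obtain ⟨S, hS⟩ := hx
    have hle : csStarCharAt x ≤ csStarChar X :=
      (le_ciSup bddAbove_of_small x).trans (le_max_right _ _)
    exact (csCharAt_le_of_convSeqTo hS).trans
      (mul_le_mul' hle (countableSubsetsSup_mono hle))
  · have hempty : IsCsNetworkAt (∅ : Set (Set X)) x := fun _ _ S hS => (hx ⟨S, hS⟩).elim
    exact (csCharAt_le_mk hempty).trans (by simp)

end CharacterBounds

/-- For every T1 topological space `X`,
`cs_χ(X) ≤ cs*_χ(X) · sup{ |[κ]^{≤ω}| : κ < cs*_χ(X) } ≤ (cs*_χ(X))^{ℵ₀}`. -/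
theorem csChar_le_csStarChar_mul_sup (X : Type u) [TopologicalSpace X] [T1Space X] :
    csChar X ≤ csStarChar X * (⨆ κ : Set.Iio (csStarChar X), countableSubsetsCard κ.1) ∧
    csStarChar X * (⨆ κ : Set.Iio (csStarChar X), countableSubsetsCard κ.1) ≤
      csStarChar X ^ (Cardinal.aleph0 : Cardinal.{u}) := by
  have hc : 1 ≤ csStarChar X := le_max_left _ _
  refine ⟨max_le ?_ (ciSup_le' csCharAt_le_csStarChar_mul),
    mul_countableSubsetsSup_le_power _⟩
  calc (1 : Cardinal.{u}) = 1 * 1 := (one_mul 1).symm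
    _ ≤ csStarChar X * countableSubsetsSup (csStarChar X) :=
      mul_le_mul' hc (one_le_countableSubsetsSup (Cardinal.one_le_iff_ne_zero.1 hc))
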